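/- arXiv:1104.4402 — 9 statements merged into one kernel-verified Lean document; each statement's English description precedes it below -/
import Mathlib

section
/- Let H(x₁,…,x_{k+1}) = x₁x₂⋯x_{k+1} and let V_f(x₁,…,x_{k+1}) = (c x_{k+1}/(1 + x₁x₂⋯x_{k+1}), x₁, …, x_k). Then H ∘ V_f = φ ∘ H on the set where 1 + x₁⋯x_{k+1} ≠ 0, where φ(t) = ct/(1+t). That is, V_f is semiconjugate to the one-dimensional Riccati map via the product map H. -/
theorem Fin.prod_cons_mul_last {M : Type*} [CommMonoid M] {k : ℕ} (a : M) (x : Fin (k + 1) → M) :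
    ∏ i, (Fin.cons (a * x (Fin.last k)) (fun i : Fin k => x i.castSucc) : Fin (k + 1) → M) i =
      a * ∏ i, x i := by
  rw [Fin.prod_cons, Fin.prod_univ_castSucc, mul_assoc, mul_comm (x (Fin.last k))]

theorem semiconjugacy_product_map_general (k : ℕ) (c : ℝ)
    (H : (Fin (k + 1) → ℝ) → ℝ) (hH : ∀ x, H x = ∏ i, x i)
    (Vf : (Fin (k + 1) → ℝ) → (Fin (k + 1) → ℝ))
    (hVf : ∀ x, Vf x =
      Fin.cons (c * x (Fin.last k) / (1 + ∏ i, x i)) (fun i : Fin k => x i.castSucc))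
    (φ : ℝ → ℝ) (hφ : ∀ t, φ t = c * t / (1 + t)) :
    ∀ x : Fin (k + 1) → ℝ, 1 + ∏ i, x i ≠ 0 → H (Vf x) = φ (H x) := by
  intro x _
  rw [hH, hH, hVf, hφ, mul_div_right_comm, Fin.prod_cons_mul_last, div_mul_eq_mul_div]

/-- The product map H semiconjugates the vectorization V_f of the rational
recurrence to the Riccati map φ(t) = ct/(1+t): H ∘ V_f = φ ∘ H whenever the
denominator 1 + x₁⋯x_{k+1} is nonzero. -/
theorem semiconjugacy_product_map (k : ℕ) (hk : 1 ≤ k) (c : ℝ) (hc : 0 < c)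
    (H : (Fin (k + 1) → ℝ) → ℝ) (hH : ∀ x, H x = ∏ i, x i)
    (Vf : (Fin (k + 1) → ℝ) → (Fin (k + 1) → ℝ))
    (hVf : ∀ x, Vf x =
      Fin.cons (c * x (Fin.last k) / (1 + ∏ i, x i)) (fun i : Fin k => x i.castSucc))
    (φ : ℝ → ℝ) (hφ : ∀ t, φ t = c * t / (1 + t)) :
    ∀ x : Fin (k + 1) → ℝ, 1 + ∏ i, x i ≠ 0 → H (Vf x) = φ (H x) :=
  semiconjugacy_product_map_general k c H hH Vf hVf φ hφ
end

section
/- If a sequence (x_n)_{n ≥ -k} of real numbers satisfies x_{n+1} = c x_{n-k}/(1 + x_n x_{n-1}⋯x_{n-k}) for all n ≥ 0 (with all denominators nonzero), then the product sequence P_n = x_n x_{n-1}⋯x_{n-k} satisfies the Riccati recurrence P_{n+1} = c P_n/(1 + P_n) for all n ≥ 0. -/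
open Finset

theorem Finset.prod_range_succ_add_eq_prod_shift_mul {M : Type*} [CommMonoid M] (x : ℕ → M)
    (n m : ℕ) : ∏ i ∈ range (m + 1), x (n + i) = (∏ i ∈ range m, x (n + 1 + i)) * x n := by
  rw [prod_range_succ']
  simp only [add_assoc, add_comm 1, add_zero]

/-- Indices are shifted: `x j` here is `x_{j-k}` in the paper. -/
theorem product_satisfies_riccati_general (k : ℕ) (c : ℝ)
    (x : ℕ → ℝ)
    (hrec : ∀ n : ℕ,
      x (n + k + 1) = c * x n / (1 + ∏ i ∈ Finset.range (k + 1), x (n + i))) :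
    ∀ n : ℕ,
      (∏ i ∈ Finset.range (k + 1), x (n + 1 + i)) =
        c * (∏ i ∈ Finset.range (k + 1), x (n + i)) /
          (1 + ∏ i ∈ Finset.range (k + 1), x (n + i)) := by
  intro n
  have hnext : x (n + 1 + k) = c * x n / (1 + ∏ i ∈ range (k + 1), x (n + i)) := by
    rw [add_right_comm]
    exact hrec n
  -- Both windows share the k middle factors; only the outer ones differ.
  rw [prod_range_succ, hnext, prod_range_succ_add_eq_prod_shift_mul]
  ring

/-- If (x_n) solves the rational recurrence (indices shifted so that x j here
is x_{j-k} in the paper), then the product of k+1 consecutive terms satisfies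
the Riccati recurrence P_{n+1} = c P_n / (1 + P_n). -/
theorem product_satisfies_riccati (k : ℕ) (hk : 1 ≤ k) (c : ℝ) (hc : 0 < c)
    (x : ℕ → ℝ)
    (hden : ∀ n : ℕ, 1 + ∏ i ∈ Finset.range (k + 1), x (n + i) ≠ 0)
    (hrec : ∀ n : ℕ,
      x (n + k + 1) = c * x n / (1 + ∏ i ∈ Finset.range (k + 1), x (n + i))) :
    ∀ n : ℕ,
      (∏ i ∈ Finset.range (k + 1), x (n + 1 + i)) =
        c * (∏ i ∈ Finset.range (k + 1), x (n + i)) /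
          (1 + ∏ i ∈ Finset.range (k + 1), x (n + i)) :=
  product_satisfies_riccati_general k c x hrec
end

section
/- Suppose the initial conditions x_{-k},…,x_0 satisfy x_{-k} x_{-k+1}⋯x_0 = -1/(∑_{i=0}^{m} cⁱ) for some m ≥ 0. Then the sequence generated by x_{n+1} = c x_{n-k}/(1 + x_n⋯x_{n-k}) satisfies x_{n} x_{n-1}⋯x_{n-k} = -1/(∑_{i=0}^{m-n} cⁱ) for 0 ≤ n ≤ m; in particular x_m x_{m-1}⋯x_{m-k} = -1, so the iteration is undefined at step m+1. -/
/-!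
Write `P n` for the product of the `k + 1` consecutive terms starting at `x n` and
`S j = ∑_{i ≤ j} cⁱ`. As `P (n + 1)` is `P n` with the factor `x n` traded for `x (n + k + 1)`,
the recurrence makes `P` follow the Möbius map `p ↦ c p / (1 + p)` on its own. That map
sends `-1 / S (j + 1)` to `-1 / S j`, because `S (j + 1) = c S j + 1`; so `P` walks down
the sequence `-1 / S j` until it reaches `-1 / S 0 = -1`.
-/

open Finset

theorem prod_window_succ_eq_of_rec {K : Type*} [Field K] {c : K} (x : ℕ → K) (n k : ℕ)
    (hrec : x (n + k + 1) = c * x n / (1 + ∏ i ∈ range (k + 1), x (n + i))) :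
    ∏ i ∈ range (k + 1), x (n + 1 + i) =
      c * (∏ i ∈ range (k + 1), x (n + i)) / (1 + ∏ i ∈ range (k + 1), x (n + i)) := by
  have hlast : ∏ i ∈ range (k + 1), x (n + 1 + i) =
      (∏ i ∈ range k, x (n + (i + 1))) * x (n + k + 1) := by
    simp only [prod_range_succ, add_right_comm n 1, add_assoc]
  rw [hlast, hrec, prod_range_succ' (fun i => x (n + i)), add_zero]
  ring

theorem mul_neg_one_div_div_one_add {K : Type*} [Field K] {c s : K} (hc : c ≠ 0) (hs : c * s + 1 ≠ 0) :
    c * (-1 / (c * s + 1)) / (1 + -1 / (c * s + 1)) = -1 / s := by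
  rcases eq_or_ne s 0 with rfl | hs0
  · simp
  field_simp
  ring

theorem forbidden_set_forward_general (k : ℕ) (c : ℝ) (hc : 0 < c)
    (m : ℕ) (x : ℕ → ℝ)
    (h0 : (∏ i ∈ Finset.range (k + 1), x i) =
      -1 / ∑ i ∈ Finset.range (m + 1), c ^ i)
    (hrec : ∀ n : ℕ, n < m →
      x (n + k + 1) = c * x n / (1 + ∏ i ∈ Finset.range (k + 1), x (n + i))) :
    (∀ n : ℕ, n ≤ m →
        (∏ i ∈ Finset.range (k + 1), x (n + i)) =
          -1 / ∑ i ∈ Finset.range (m - n + 1), c ^ i) ∧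
      (∏ i ∈ Finset.range (k + 1), x (m + i)) = -1 := by
  have window : ∀ n : ℕ, n ≤ m →
      (∏ i ∈ range (k + 1), x (n + i)) = -1 / ∑ i ∈ range (m - n + 1), c ^ i := by
    intro n hn
    induction n with
    | zero => simpa using h0
    | succ n ih =>
      have hgeom : ∑ i ∈ range (m - n + 1), c ^ i =
          c * ∑ i ∈ range (m - (n + 1) + 1), c ^ i + 1 := by
        rw [show m - n = m - (n + 1) + 1 by omega, geom_sum_succ]
      have hS : 0 < ∑ i ∈ range (m - (n + 1) + 1), c ^ i :=
        sum_pos (fun i _ => pow_pos hc i) nonempty_range_add_one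
      rw [prod_window_succ_eq_of_rec x n k (hrec n hn), ih (by omega), hgeom,
        mul_neg_one_div_div_one_add hc.ne' (by positivity)]
  exact ⟨window, by simpa using window m le_rfl⟩

/-- If the initial product equals -1/(∑_{i=0}^m cⁱ) then, along the recurrence,
the product of k+1 consecutive terms at time n equals -1/(∑_{i=0}^{m-n} cⁱ) for
0 ≤ n ≤ m; in particular it equals -1 at time m, so the next step is undefined.
(Indices shifted: x j here is x_{j-k} in the paper.) -/
theorem forbidden_set_forward (k : ℕ) (hk : 1 ≤ k) (c : ℝ) (hc : 0 < c)
    (m : ℕ) (x : ℕ → ℝ)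
    (h0 : (∏ i ∈ Finset.range (k + 1), x i) =
      -1 / ∑ i ∈ Finset.range (m + 1), c ^ i)
    (hrec : ∀ n : ℕ, n < m →
      x (n + k + 1) = c * x n / (1 + ∏ i ∈ Finset.range (k + 1), x (n + i))) :
    (∀ n : ℕ, n ≤ m →
        (∏ i ∈ Finset.range (k + 1), x (n + i)) =
          -1 / ∑ i ∈ Finset.range (m - n + 1), c ^ i) ∧
      (∏ i ∈ Finset.range (k + 1), x (m + i)) = -1 :=
  forbidden_set_forward_general k c hc m x h0 hrec
end

section
/- Conversely, if a sequence (x_n) satisfying x_{n+1} = c x_{n-k}/(1 + x_n⋯x_{n-k}) for 0 ≤ n < n₀ reaches a point where x_{n₀} x_{n₀-1}⋯x_{n₀-k} = -1, then the initial conditions satisfy x_0 x_{-1}⋯x_{-k} = -1/(∑_{i=0}^{n₀} cⁱ). Hence the forbidden set of the equation is exactly ⋃_{m≥0} {(f₁,…,f_{k+1}) : f₁ f₂⋯f_{k+1} = -1/∑_{i=0}^m cⁱ}. -/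
/-- The solution sequence of x_{n+1} = c x_{n-k}/(1 + x_n ⋯ x_{n-k}) generated
from the initial tuple f = (x_{-k}, …, x_0); indices shifted so `seqx k c f j`
is x_{j-k}.  (Division by zero follows Lean's convention; the forbidden set is
detected by a vanishing denominator.) -/
noncomputable def seqx (k : ℕ) (c : ℝ) (f : Fin (k + 1) → ℝ) : ℕ → ℝ
  | n =>
    if h : n < k + 1 then f ⟨n, h⟩
    else
      c * seqx k c f (n - (k + 1)) /
        (1 + ∏ i ∈ Finset.range (k + 1), seqx k c f (n - 1 - i))
  decreasing_by
  · omega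
  · omega

/-! The product `P n = x n ⋯ x (n + k)` of a solution obeys `P (n + 1) = c P n / (1 + P n)`.
With `S m = ∑_{i ≤ m} cⁱ` one has `S (m + 1) = 1 + c S m`, so this map sends `-1 / S (m + 1)` to
`-1 / S m`, and it is injective away from `-1`. Hence `P n₀ = -1 = -1 / S 0` pulls back step by
step to `P 0 = -1 / S n₀`, and conversely `P 0 = -1 / S m` reaches `-1` after `m` steps. -/

open Finset

def windowProd {M : Type*} [CommMonoid M] (k : ℕ) (x : ℕ → M) (n : ℕ) : M :=
  ∏ i ∈ range (k + 1), x (n + i)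

theorem prod_range_add_sub_eq_windowProd {M : Type*} [CommMonoid M] (k : ℕ) (x : ℕ → M)
    (n : ℕ) : ∏ i ∈ range (k + 1), x (n + k - i) = windowProd k x n := by
  rw [windowProd, ← prod_range_reflect]
  refine prod_congr rfl fun i hi ↦ ?_
  rw [mem_range] at hi
  congr 1
  omega

def prodStep {K : Type*} [DivisionRing K] (c p : K) : K := c * p / (1 + p)

section Field

variable {K : Type*} [Field K]

theorem windowProd_succ_eq_prodStep {c : K} {k n : ℕ} {x : ℕ → K}
    (hx : x (n + k + 1) = c * x n / (1 + windowProd k x n)) :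
    windowProd k x (n + 1) = prodStep c (windowProd k x n) := by
  have h_succ : windowProd k x (n + 1) = (∏ i ∈ range k, x (n + 1 + i)) * x (n + k + 1) := by
    rw [windowProd, prod_range_succ, add_right_comm]
  have h_self : windowProd k x n = (∏ i ∈ range k, x (n + 1 + i)) * x n := by
    simp only [windowProd, prod_range_succ', add_zero, add_assoc, add_comm 1]
  rw [h_succ, hx, h_self, prodStep]
  ring

theorem prodStep_injOn {c : K} (hc : c ≠ 0) : Set.InjOn (prodStep c) {p | 1 + p ≠ 0} := by
  intro p hp q hq h
  simp only [prodStep, Set.mem_ofPred_eq] at hp hq h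
  rw [div_eq_div_iff hp hq] at h
  have : c * (p - q) = 0 := by linear_combination h
  simpa [hc, sub_eq_zero] using this

end Field

section OrderedField

variable {K : Type*} [Field K] [LinearOrder K] [IsStrictOrderedRing K] {c : K}

theorem prodStep_neg_inv_geom_sum (hc : 0 < c) (m : ℕ) :
    prodStep c (-1 / ∑ i ∈ range (m + 2), c ^ i) = -1 / ∑ i ∈ range (m + 1), c ^ i := by
  have hS := (geom_sum_pos hc.le m.succ_ne_zero).ne'
  rw [prodStep, geom_sum_succ (n := m + 1)]
  field_simp
  ring

theorem one_add_neg_inv_geom_sum_ne_zero (hc : 0 < c) (m : ℕ) :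
    1 + -1 / ∑ i ∈ range (m + 2), c ^ i ≠ 0 := by
  have hS : 0 < c * ∑ i ∈ range (m + 1), c ^ i := mul_pos hc (geom_sum_pos hc.le m.succ_ne_zero)
  rw [geom_sum_succ (n := m + 1), add_div' _ _ _ (by positivity)]
  exact div_ne_zero (by linarith) (by positivity)

theorem eq_neg_inv_geom_sum_of_iterate_eq_neg_one (hc : 0 < c) {n₀ : ℕ} {P : ℕ → K}
    (hne : ∀ n < n₀, 1 + P n ≠ 0) (hstep : ∀ n < n₀, P (n + 1) = prodStep c (P n))
    (hP : P n₀ = -1) :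
    P 0 = -1 / ∑ i ∈ range (n₀ + 1), c ^ i := by
  induction n₀ generalizing P with
  | zero => simpa using hP
  | succ m ih =>
    have h_one : P 1 = -1 / ∑ i ∈ range (m + 1), c ^ i := by
      simpa using ih (P := fun n ↦ P (n + 1)) (fun n hn ↦ hne _ (by omega))
        (fun n hn ↦ hstep _ (by omega)) hP
    refine prodStep_injOn hc.ne' (hne 0 m.succ_pos) (one_add_neg_inv_geom_sum_ne_zero hc m) ?_
    rw [prodStep_neg_inv_geom_sum hc, ← h_one, hstep 0 m.succ_pos]

theorem iterate_eq_neg_one_of_eq_neg_inv_geom_sum (hc : 0 < c) {m : ℕ} {P : ℕ → K}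
    (hstep : ∀ n, P (n + 1) = prodStep c (P n))
    (hP : P 0 = -1 / ∑ i ∈ range (m + 1), c ^ i) :
    P m = -1 := by
  induction m generalizing P with
  | zero => simpa using hP
  | succ m ih =>
    exact ih (P := fun n ↦ P (n + 1)) (fun n ↦ hstep _)
      (by rw [hstep, hP, prodStep_neg_inv_geom_sum hc])

end OrderedField

section seqx

variable {k : ℕ} {c : ℝ} {f : Fin (k + 1) → ℝ}

theorem seqx_of_lt {n : ℕ} (h : n < k + 1) : seqx k c f n = f ⟨n, h⟩ := by
  rw [seqx, dif_pos h]

theorem seqx_add_succ (n : ℕ) :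
    seqx k c f (n + k + 1) = c * seqx k c f n / (1 + windowProd k (seqx k c f) n) := by
  rw [seqx, dif_neg (by omega), ← prod_range_add_sub_eq_windowProd]
  simp only [show n + k + 1 - (k + 1) = n by omega, Nat.add_sub_cancel]

theorem windowProd_seqx_zero : windowProd k (seqx k c f) 0 = ∏ i, f i := by
  rw [windowProd, ← Fin.prod_univ_eq_prod_range]
  exact prod_congr rfl fun i _ ↦ by rw [zero_add, seqx_of_lt i.isLt]

theorem windowProd_seqx_succ (n : ℕ) :
    windowProd k (seqx k c f) (n + 1) = prodStep c (windowProd k (seqx k c f) n) :=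
  windowProd_succ_eq_prodStep (seqx_add_succ n)

end seqx

theorem forbidden_set_converse_and_characterization_general (k : ℕ)
    (c : ℝ) (hc : 0 < c) :
    (∀ (x : ℕ → ℝ) (n₀ : ℕ),
      (∀ n : ℕ, n < n₀ → 1 + ∏ i ∈ Finset.range (k + 1), x (n + i) ≠ 0) →
      (∀ n : ℕ, n < n₀ →
        x (n + k + 1) = c * x n / (1 + ∏ i ∈ Finset.range (k + 1), x (n + i))) →
      (∏ i ∈ Finset.range (k + 1), x (n₀ + i)) = -1 →
      (∏ i ∈ Finset.range (k + 1), x i) =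
        -1 / ∑ i ∈ Finset.range (n₀ + 1), c ^ i) ∧
    {f : Fin (k + 1) → ℝ |
        ∃ n : ℕ, 1 + ∏ i ∈ Finset.range (k + 1), seqx k c f (n + k - i) = 0} =
      ⋃ m : ℕ, {f : Fin (k + 1) → ℝ |
        (∏ i, f i) = -1 / ∑ i ∈ Finset.range (m + 1), c ^ i} := by
  refine ⟨fun x n₀ hne hrec hprod ↦ ?_, ?_⟩
  · simpa [windowProd] using eq_neg_inv_geom_sum_of_iterate_eq_neg_one hc (P := windowProd k x)
      hne (fun n hn ↦ windowProd_succ_eq_prodStep (hrec n hn)) hprod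
  ext f
  simp only [Set.mem_ofPred_eq, Set.mem_iUnion, prod_range_add_sub_eq_windowProd,
    ← windowProd_seqx_zero (c := c)]
  constructor
  · intro hex
    have hfirst : windowProd k (seqx k c f) (Nat.find hex) = -1 := by
      linear_combination Nat.find_spec hex
    exact ⟨Nat.find hex, eq_neg_inv_geom_sum_of_iterate_eq_neg_one hc
      (fun n hn ↦ Nat.find_min hex hn) (fun n _ ↦ windowProd_seqx_succ n) hfirst⟩
  · rintro ⟨m, hm⟩
    refine ⟨m, ?_⟩
    rw [iterate_eq_neg_one_of_eq_neg_inv_geom_sum hc windowProd_seqx_succ hm]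
    norm_num

/-- Converse direction of the forbidden-set theorem, together with the
characterization of the forbidden set: if the product of k+1 consecutive terms
equals -1 at time n₀ then the initial product is -1/(∑_{i=0}^{n₀} cⁱ); hence
the forbidden set is exactly ⋃ₘ { f : f₁⋯f_{k+1} = -1/∑_{i=0}^m cⁱ }. -/
theorem forbidden_set_converse_and_characterization (k : ℕ) (hk : 1 ≤ k)
    (c : ℝ) (hc : 0 < c) :
    (∀ (x : ℕ → ℝ) (n₀ : ℕ),
      (∀ n : ℕ, n < n₀ → 1 + ∏ i ∈ Finset.range (k + 1), x (n + i) ≠ 0) →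
      (∀ n : ℕ, n < n₀ →
        x (n + k + 1) = c * x n / (1 + ∏ i ∈ Finset.range (k + 1), x (n + i))) →
      (∏ i ∈ Finset.range (k + 1), x (n₀ + i)) = -1 →
      (∏ i ∈ Finset.range (k + 1), x i) =
        -1 / ∑ i ∈ Finset.range (n₀ + 1), c ^ i) ∧
    {f : Fin (k + 1) → ℝ |
        ∃ n : ℕ, 1 + ∏ i ∈ Finset.range (k + 1), seqx k c f (n + k - i) = 0} =
      ⋃ m : ℕ, {f : Fin (k + 1) → ℝ |
        (∏ i, f i) = -1 / ∑ i ∈ Finset.range (m + 1), c ^ i} :=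
  forbidden_set_converse_and_characterization_general k c hc
end

section
/- Let 0 < c < 1 and let (x_n)_{n ≥ -k} be a nonnegative solution of x_{n+1} = c x_{n-k}/(1 + x_n⋯x_{n-k}). Then for all n ≥ -k, 0 ≤ x_{n+1} ≤ c^{⌈(n+1)/(k+1)⌉} · max{x_{-k}, x_{-k+1}, …, x_0}. -/
/-! Dropping the denominator gives `x (n + k + 1) ≤ c * x n`, so each step of length `k + 1`
gains a factor `c`; the paper's exponent `⌈(j - k) / (k + 1)⌉` is just the number `j / (k + 1)`
of complete steps. -/

theorem Int.ceil_natCast_sub_div_succ {α : Type*} [Field α] [LinearOrder α]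
    [IsStrictOrderedRing α] [FloorRing α] (j k : ℕ) :
    ⌈((j : α) - k) / (k + 1)⌉ = ((j / (k + 1) : ℕ) : ℤ) := by
  have hk : (0 : α) < k + 1 := by positivity
  have hdiv : ((j / (k + 1) : ℕ) : α) * (k + 1) + ((j % (k + 1) : ℕ) : α) = j := by
    exact_mod_cast (Nat.div_add_mod' j (k + 1))
  have hmod : ((j % (k + 1) : ℕ) : α) ≤ k := by
    exact_mod_cast Nat.le_of_lt_succ (Nat.mod_lt j k.succ_pos)
  rw [Int.ceil_eq_iff, Int.cast_natCast, lt_div_iff₀ hk, div_le_iff₀ hk]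
  constructor <;> nlinarith [(Nat.cast_nonneg (j % (k + 1)) : (0 : α) ≤ _)]

theorem le_pow_div_mul_of_le_mul {α : Type*} [Semiring α] [PartialOrder α] [IsOrderedRing α]
    {k : ℕ} {c M : α} {x : ℕ → α} (hc : 0 ≤ c) (hstep : ∀ n, x (n + k + 1) ≤ c * x n)
    (hM : ∀ i < k + 1, x i ≤ M) (j : ℕ) : x j ≤ c ^ (j / (k + 1)) * M := by
  induction j using Nat.strong_induction_on with
  | _ j ih =>
    rcases lt_or_ge j (k + 1) with hjk | hjk
    · simpa [Nat.div_eq_of_lt hjk] using hM j hjk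
    · obtain ⟨n, rfl⟩ : ∃ n, j = n + k + 1 := ⟨j - (k + 1), by omega⟩
      calc x (n + k + 1) ≤ c * x n := hstep n
        _ ≤ c * (c ^ (n / (k + 1)) * M) := mul_le_mul_of_nonneg_left (ih n (by omega)) hc
        _ = c ^ ((n + k + 1) / (k + 1)) * M := by
          rw [add_assoc, Nat.add_div_right n k.succ_pos, pow_succ', mul_assoc]

theorem exponential_bound_general (k : ℕ) (c : ℝ) (hc0 : 0 < c)
    (x : ℕ → ℝ) (hnonneg : ∀ n, 0 ≤ x n)
    (hrec : ∀ n : ℕ,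
      x (n + k + 1) = c * x n / (1 + ∏ i ∈ Finset.range (k + 1), x (n + i))) :
    ∀ j : ℕ, 1 ≤ j →
      0 ≤ x j ∧
        x j ≤ c ^ (⌈((j : ℚ) - k) / (k + 1)⌉ : ℤ) *
          (Finset.range (k + 1)).sup'
            (Finset.nonempty_range_iff.mpr (Nat.succ_ne_zero k)) x := by
  have hstep (n : ℕ) : x (n + k + 1) ≤ c * x n := by
    rw [hrec n]
    exact div_le_self (mul_nonneg hc0.le (hnonneg n))
      (le_add_of_nonneg_right (Finset.prod_nonneg fun i _ => hnonneg _))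
  intro j _
  refine ⟨hnonneg j, ?_⟩
  rw [Int.ceil_natCast_sub_div_succ, zpow_natCast]
  exact le_pow_div_mul_of_le_mul hc0.le hstep
    (fun i hi => Finset.le_sup' x (Finset.mem_range.mpr hi)) j

/-- For 0 < c < 1, every nonnegative solution satisfies
0 ≤ x_{n+1} ≤ c^{⌈(n+1)/(k+1)⌉} · max{x_{-k},…,x_0} for all n ≥ -k.
(Indices shifted: x j here is x_{j-k} in the paper, so the claim is about
x j for j ≥ 1 with exponent ⌈(j-k)/(k+1)⌉.) -/
theorem exponential_bound (k : ℕ) (hk : 1 ≤ k) (c : ℝ) (hc0 : 0 < c) (hc1 : c < 1)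
    (x : ℕ → ℝ) (hnonneg : ∀ n, 0 ≤ x n)
    (hrec : ∀ n : ℕ,
      x (n + k + 1) = c * x n / (1 + ∏ i ∈ Finset.range (k + 1), x (n + i))) :
    ∀ j : ℕ, 1 ≤ j →
      0 ≤ x j ∧
        x j ≤ c ^ (⌈((j : ℚ) - k) / (k + 1)⌉ : ℤ) *
          (Finset.range (k + 1)).sup'
            (Finset.nonempty_range_iff.mpr (Nat.succ_ne_zero k)) x :=
  exponential_bound_general k c hc0 x hnonneg hrec
end

section
/- Let 0 < c < 1. Every solution of x_{n+1} = c x_{n-k}/(1 + x_n⋯x_{n-k}) with nonnegative initial conditions converges exponentially to 0: there exist constants C ≥ 0 and γ ∈ (0,1) (depending on the initial data) such that 0 ≤ x_n ≤ C γⁿ for all n ≥ 1. -/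
/-!
Since the denominator is at least `1`, each term is at most `c` times the term `k + 1` steps
earlier, so along every residue class mod `k + 1` the solution decays like a geometric sequence
of ratio `c`; with `γ = c ^ (1 / (k + 1))` this is decay like `γⁿ`.
-/

open Finset

section ShiftDecay

variable {x : ℕ → ℝ} {p : ℕ}

theorem le_mul_pow_of_le_pow_mul_shift {γ C : ℝ} (hp : 0 < p) (hγ : 0 ≤ γ)
    (hinit : ∀ i < p, x i ≤ C * γ ^ i) (hshift : ∀ n, x (n + p) ≤ γ ^ p * x n) (n : ℕ) :
    x n ≤ C * γ ^ n := by
  induction n using Nat.strong_induction_on with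
  | _ n ih =>
    rcases lt_or_ge n p with hn | hn
    · exact hinit n hn
    · obtain ⟨m, rfl⟩ : ∃ m, n = m + p := ⟨n - p, by omega⟩
      calc x (m + p) ≤ γ ^ p * x m := hshift m
        _ ≤ γ ^ p * (C * γ ^ m) := by gcongr; exact ih m (by omega)
        _ = C * γ ^ (m + p) := by ring

theorem exists_le_mul_pow_of_le_mul_shift {c : ℝ} (hp : 0 < p) (hc0 : 0 < c) (hc1 : c < 1)
    (hx : ∀ i < p, 0 ≤ x i) (hshift : ∀ n, x (n + p) ≤ c * x n) :
    ∃ C, 0 ≤ C ∧ ∃ γ, 0 < γ ∧ γ < 1 ∧ ∀ n, x n ≤ C * γ ^ n := by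
  set γ : ℝ := c ^ ((p : ℝ)⁻¹)
  have hγ0 : 0 < γ := Real.rpow_pos_of_pos hc0 _
  have hγ1 : γ < 1 := Real.rpow_lt_one hc0.le hc1 (by positivity)
  have hγp : γ ^ p = c := Real.rpow_inv_natCast_pow hc0.le hp.ne'
  set C := ∑ i ∈ range p, x i / γ ^ i
  have hterm : ∀ i < p, 0 ≤ x i / γ ^ i := fun i hi => div_nonneg (hx i hi) (by positivity)
  have hinit : ∀ i < p, x i ≤ C * γ ^ i := fun i hi => by
    rw [← div_le_iff₀ (by positivity)]
    exact single_le_sum (fun j hj => hterm j (mem_range.mp hj)) (mem_range.mpr hi)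
  refine ⟨C, sum_nonneg fun i hi => hterm i (mem_range.mp hi), γ, hγ0, hγ1, ?_⟩
  exact le_mul_pow_of_le_pow_mul_shift hp hγ0.le hinit (hγp ▸ hshift)

end ShiftDecay

section Recurrence

variable {k : ℕ} {c : ℝ} {x : ℕ → ℝ}

theorem nonneg_of_recurrence (hc : 0 ≤ c) (hinit : ∀ i : ℕ, i ≤ k → 0 ≤ x i)
    (hrec : ∀ n : ℕ, x (n + k + 1) = c * x n / (1 + ∏ i ∈ range (k + 1), x (n + i)))
    (m : ℕ) : 0 ≤ x m := by
  induction m using Nat.strong_induction_on with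
  | _ m ih =>
    rcases le_or_gt m k with hm | hm
    · exact hinit m hm
    · obtain ⟨n, rfl⟩ : ∃ n, m = n + k + 1 := ⟨m - (k + 1), by omega⟩
      have hprod : 0 ≤ ∏ i ∈ range (k + 1), x (n + i) :=
        prod_nonneg fun i hi => ih (n + i) (by have := mem_range.mp hi; omega)
      rw [hrec n]
      exact div_nonneg (mul_nonneg hc (ih n (by omega))) (by linarith)

theorem le_mul_of_recurrence (hc : 0 ≤ c) (hx : ∀ m, 0 ≤ x m)
    (hrec : ∀ n : ℕ, x (n + k + 1) = c * x n / (1 + ∏ i ∈ range (k + 1), x (n + i)))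
    (n : ℕ) : x (n + (k + 1)) ≤ c * x n := by
  have hden : 1 ≤ 1 + ∏ i ∈ range (k + 1), x (n + i) :=
    le_add_of_nonneg_right (prod_nonneg fun i _ => hx (n + i))
  rw [← add_assoc, hrec n]
  exact div_le_self (mul_nonneg hc (hx n)) hden

end Recurrence

/-- Indices are shifted: `x j` here is `x_{j-k}` of the paper. -/
theorem exponential_convergence_to_zero_general (k : ℕ) (c : ℝ)
    (hc0 : 0 < c) (hc1 : c < 1) (x : ℕ → ℝ)
    (hinit : ∀ i : ℕ, i ≤ k → 0 ≤ x i)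
    (hrec : ∀ n : ℕ,
      x (n + k + 1) = c * x n / (1 + ∏ i ∈ Finset.range (k + 1), x (n + i))) :
    ∃ C : ℝ, 0 ≤ C ∧ ∃ γ : ℝ, 0 < γ ∧ γ < 1 ∧
      ∀ n : ℕ, 1 ≤ n → 0 ≤ x (n + k) ∧ x (n + k) ≤ C * γ ^ n := by
  have hx := nonneg_of_recurrence hc0.le hinit hrec
  obtain ⟨C, hC, γ, hγ0, hγ1, hbound⟩ := exists_le_mul_pow_of_le_mul_shift k.succ_pos hc0 hc1
    (fun i _ => hx i) (le_mul_of_recurrence hc0.le hx hrec)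
  refine ⟨C, hC, γ, hγ0, hγ1, fun n _ => ⟨hx _, ?_⟩⟩
  calc x (n + k) ≤ C * γ ^ (n + k) := hbound _
    _ ≤ C * γ ^ n := by gcongr C * ?_; exact pow_le_pow_of_le_one hγ0.le hγ1.le (n.le_add_right k)

/-- For 0 < c < 1, every solution with nonnegative initial data converges
exponentially to 0: there are C ≥ 0 and γ ∈ (0,1) with 0 ≤ x_n ≤ C γⁿ for
n ≥ 1.  (Indices shifted: x j here is x_{j-k} in the paper.) -/
theorem exponential_convergence_to_zero (k : ℕ) (hk : 1 ≤ k) (c : ℝ)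
    (hc0 : 0 < c) (hc1 : c < 1) (x : ℕ → ℝ)
    (hinit : ∀ i : ℕ, i ≤ k → 0 ≤ x i)
    (hrec : ∀ n : ℕ,
      x (n + k + 1) = c * x n / (1 + ∏ i ∈ Finset.range (k + 1), x (n + i))) :
    ∃ C : ℝ, 0 ≤ C ∧ ∃ γ : ℝ, 0 < γ ∧ γ < 1 ∧
      ∀ n : ℕ, 1 ≤ n → 0 ≤ x (n + k) ∧ x (n + k) ≤ C * γ ^ n :=
  exponential_convergence_to_zero_general k c hc0 hc1 x hinit hrec
end

section
/- Let c > 1 and let (x_n) be a positive solution of x_{n+1} = c x_{n-k}/(1 + x_n⋯x_{n-k}). Then the product P_n = x_n x_{n-1}⋯x_{n-k} converges to c - 1 as n → ∞. -/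
open Filter Topology Finset

/-!
Dividing two consecutive instances of the recursion, the window products
`P n = x n ⋯ x (n + k)` obey the Beverton–Holt recursion `P (n + 1) = c P n / (1 + P n)`.
Its reciprocal `1 / P` satisfies the affine contraction `y (n + 1) = (y n + 1) / c`,
so `1 / P n → 1 / (c - 1)` geometrically.
-/

theorem Finset.mul_prod_range_succ_shift {M : Type*} [CommMonoid M] (x : ℕ → M) (k n : ℕ) :
    x n * ∏ i ∈ range (k + 1), x (n + 1 + i) = (∏ i ∈ range (k + 1), x (n + i)) * x (n + k + 1) := by
  calc x n * ∏ i ∈ range (k + 1), x (n + 1 + i) = ∏ i ∈ range (k + 1 + 1), x (n + i) := by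
        rw [prod_range_succ' (fun i => x (n + i))]
        simp only [add_zero, mul_comm (x n), ← add_assoc, add_right_comm n 1]
    _ = _ := prod_range_succ _ _

theorem tendsto_of_affine_rec {𝕜 : Type*} [NormedField 𝕜] {a b : 𝕜} (ha : ‖a‖ < 1)
    {y : ℕ → 𝕜} (hrec : ∀ n, y (n + 1) = a * y n + b) :
    Tendsto y atTop (𝓝 (b / (1 - a))) := by
  set L := b / (1 - a) with hLdef
  have hL : a * L + b = L := by
    have : 1 - a ≠ 0 := sub_ne_zero.2 fun h => by simp [← h] at ha
    rw [hLdef]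
    field_simp
    ring
  have hform : ∀ n, y n = a ^ n * (y 0 - L) + L := by
    intro n
    induction n with
    | zero => simp
    | succ n ih => rw [hrec, ih, pow_succ]; linear_combination hL
  have := ((tendsto_pow_atTop_nhds_zero_of_norm_lt_one ha).mul_const (y 0 - L)).add_const L
  simpa only [zero_mul, zero_add, ← hform] using this

theorem tendsto_sub_one_of_bevertonHolt {c : ℝ} (hc : 1 < c) {P : ℕ → ℝ} (h0 : 0 < P 0)
    (hrec : ∀ n, P (n + 1) = c * P n / (1 + P n)) :
    Tendsto P atTop (𝓝 (c - 1)) := by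
  have hpos : ∀ n, 0 < P n := by
    intro n
    induction n with
    | zero => exact h0
    | succ n ih => rw [hrec]; positivity
  have hinv : ∀ n, (P (n + 1))⁻¹ = c⁻¹ * (P n)⁻¹ + c⁻¹ := by
    intro n
    have := (hpos n).ne'
    rw [hrec]
    field_simp
  have hcinv : ‖c⁻¹‖ < 1 := by
    rw [norm_inv, Real.norm_of_nonneg (by linarith)]
    exact inv_lt_one_of_one_lt₀ hc
  have hfix : c⁻¹ / (1 - c⁻¹) = (c - 1)⁻¹ := by
    have : c ≠ 0 := by linarith
    field_simp
  have hlim := tendsto_of_affine_rec (y := fun n => (P n)⁻¹) hcinv hinv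
  rw [hfix] at hlim
  simpa only [inv_inv] using hlim.inv₀ (inv_ne_zero (by linarith))

theorem pos_of_forall_le_of_rec {k : ℕ} {c : ℝ} (hc : 0 < c) {x : ℕ → ℝ}
    (hinit : ∀ i ≤ k, 0 < x i)
    (hrec : ∀ n, x (n + k + 1) = c * x n / (1 + ∏ i ∈ range (k + 1), x (n + i))) (n : ℕ) :
    0 < x n := by
  induction n using Nat.strong_induction_on with
  | _ n ih =>
    rcases le_or_gt n k with h | h
    · exact hinit n h
    obtain ⟨m, rfl⟩ : ∃ m, n = m + k + 1 := ⟨n - (k + 1), by omega⟩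
    have hP : 0 < ∏ i ∈ range (k + 1), x (m + i) :=
      prod_pos fun i hi => ih _ (by simp only [mem_range] at hi; omega)
    rw [hrec m]
    have := ih m (by omega)
    positivity

theorem prod_window_rec {k : ℕ} {c : ℝ} {x : ℕ → ℝ} (hx : ∀ n, x n ≠ 0)
    (hrec : ∀ n, x (n + k + 1) = c * x n / (1 + ∏ i ∈ range (k + 1), x (n + i))) (n : ℕ) :
    ∏ i ∈ range (k + 1), x (n + 1 + i) =
      c * (∏ i ∈ range (k + 1), x (n + i)) / (1 + ∏ i ∈ range (k + 1), x (n + i)) := by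
  have h := mul_prod_range_succ_shift x k n
  rw [hrec] at h
  refine mul_left_cancel₀ (hx n) (h.trans ?_)
  ring

-- `x j` is the paper's `x_{j-k}`.
theorem product_tendsto_c_sub_one_general (k : ℕ) (c : ℝ) (hc : 1 < c)
    (x : ℕ → ℝ) (hinit : ∀ i : ℕ, i ≤ k → 0 < x i)
    (hrec : ∀ n : ℕ,
      x (n + k + 1) = c * x n / (1 + ∏ i ∈ Finset.range (k + 1), x (n + i))) :
    Tendsto (fun n : ℕ => ∏ i ∈ Finset.range (k + 1), x (n + i)) atTop
      (𝓝 (c - 1)) := by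
  have hx := pos_of_forall_le_of_rec (by linarith) hinit hrec
  exact tendsto_sub_one_of_bevertonHolt hc (prod_pos fun i _ => hx _) (prod_window_rec (fun n => (hx n).ne') hrec)

/-- For c > 1 and a positive solution, the product of k+1 consecutive terms
converges to c - 1.  (Indices shifted: x j here is x_{j-k}.) -/
theorem product_tendsto_c_sub_one (k : ℕ) (hk : 1 ≤ k) (c : ℝ) (hc : 1 < c)
    (x : ℕ → ℝ) (hinit : ∀ i : ℕ, i ≤ k → 0 < x i)
    (hrec : ∀ n : ℕ,
      x (n + k + 1) = c * x n / (1 + ∏ i ∈ Finset.range (k + 1), x (n + i))) :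
    Tendsto (fun n : ℕ => ∏ i ∈ Finset.range (k + 1), x (n + i)) atTop
      (𝓝 (c - 1)) :=
  product_tendsto_c_sub_one_general k c hc x hinit hrec
end

section
/- Let c = 1 and let (x_n) be a solution of x_{n+1} = x_{n-k}/(1 + x_n⋯x_{n-k}) with strictly positive initial conditions. Then the product P_n = x_n x_{n-1}⋯x_{n-k} is strictly positive, strictly decreasing, and converges to 0. -/
open Filter Topology Finset

/-! For the window product `P n = x n ⋯ x (n + k)` one has `P n * x (n + k + 1) = P (n + 1) * x n`,
so the recurrence becomes `P (n + 1) = P n / (1 + P n)`, i.e. `1 / P (n + 1) = 1 / P n + 1`. Hence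
`P n = (1 / P 0 + n)⁻¹`, which is positive, strictly decreasing and tends to `0`. -/

lemma prod_range_mul_shift {M : Type*} [CommMonoid M] (x : ℕ → M) (m n : ℕ) :
    (∏ i ∈ range m, x (n + i)) * x (n + m) = (∏ i ∈ range m, x (n + 1 + i)) * x n := by
  rw [← prod_range_succ (fun i => x (n + i)), prod_range_succ']
  simp only [add_zero, add_right_comm n 1, add_assoc]

section Recurrence

variable {k : ℕ} {x : ℕ → ℝ}
  (hrec : ∀ n : ℕ, x (n + k + 1) = x n / (1 + ∏ i ∈ range (k + 1), x (n + i)))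
include hrec

lemma pos_of_rec (hinit : ∀ i ≤ k, 0 < x i) (n : ℕ) : 0 < x n := by
  induction n using Nat.strong_induction_on with
  | _ n ih =>
    rcases le_or_gt n k with hn | hn
    · exact hinit n hn
    obtain ⟨m, rfl⟩ : ∃ m, n = m + k + 1 := ⟨n - (k + 1), by omega⟩
    have hprod : 0 < ∏ i ∈ range (k + 1), x (m + i) :=
      prod_pos fun i hi => ih (m + i) (by simp only [mem_range] at hi; omega)
    rw [hrec m]
    have := ih m (by omega)
    positivity

lemma prod_window_succ (hx : ∀ n, 0 < x n) (n : ℕ) :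
    ∏ i ∈ range (k + 1), x (n + 1 + i) =
      (∏ i ∈ range (k + 1), x (n + i)) / (1 + ∏ i ∈ range (k + 1), x (n + i)) := by
  have hshift := prod_range_mul_shift x (k + 1) n
  rw [← add_assoc, hrec n] at hshift
  rw [← mul_left_inj' (hx n).ne', ← hshift]
  ring

end Recurrence

section InverseStep

variable {p : ℕ → ℝ} (hp : 0 < p 0) (hstep : ∀ n, p (n + 1) = p n / (1 + p n))
include hp hstep

lemma eq_inv_add_natCast_of_step (n : ℕ) : p n = ((p 0)⁻¹ + n)⁻¹ := by
  induction n with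
  | zero => simp
  | succ n ih =>
    have : 0 < (p 0)⁻¹ + n := by positivity
    rw [hstep, ih]
    push_cast
    field_simp
    ring

lemma strictAnti_of_step : StrictAnti p := by
  intro m n hmn
  rw [eq_inv_add_natCast_of_step hp hstep m, eq_inv_add_natCast_of_step hp hstep n]
  gcongr

lemma tendsto_zero_of_step : Tendsto p atTop (𝓝 0) := by
  have hden : Tendsto (fun n : ℕ => (p 0)⁻¹ + n) atTop atTop :=
    tendsto_atTop_add_const_left _ _ tendsto_natCast_atTop_atTop
  refine (tendsto_inv_atTop_zero.comp hden).congr fun n => ?_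
  exact (eq_inv_add_natCast_of_step hp hstep n).symm

end InverseStep

theorem product_strictly_decreasing_to_zero_general (k : ℕ)
    (x : ℕ → ℝ) (hinit : ∀ i : ℕ, i ≤ k → 0 < x i)
    (hrec : ∀ n : ℕ,
      x (n + k + 1) = x n / (1 + ∏ i ∈ Finset.range (k + 1), x (n + i))) :
    (∀ n : ℕ, 0 < ∏ i ∈ Finset.range (k + 1), x (n + i)) ∧
      StrictAnti (fun n : ℕ => ∏ i ∈ Finset.range (k + 1), x (n + i)) ∧
      Tendsto (fun n : ℕ => ∏ i ∈ Finset.range (k + 1), x (n + i)) atTop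
        (𝓝 0) := by
  have hx := pos_of_rec hrec hinit
  have hP (n : ℕ) : 0 < ∏ i ∈ range (k + 1), x (n + i) := prod_pos fun i _ => hx (n + i)
  have hstep := prod_window_succ hrec hx
  exact ⟨hP, strictAnti_of_step (hP 0) hstep, tendsto_zero_of_step (hP 0) hstep⟩

/-- For c = 1 and a strictly positive solution, the product of k+1 consecutive
terms is positive, strictly decreasing, and tends to 0.
(Indices shifted: x j here is x_{j-k}.) -/
theorem product_strictly_decreasing_to_zero (k : ℕ) (hk : 1 ≤ k)
    (x : ℕ → ℝ) (hinit : ∀ i : ℕ, i ≤ k → 0 < x i)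
    (hrec : ∀ n : ℕ,
      x (n + k + 1) = x n / (1 + ∏ i ∈ Finset.range (k + 1), x (n + i))) :
    (∀ n : ℕ, 0 < ∏ i ∈ Finset.range (k + 1), x (n + i)) ∧
      StrictAnti (fun n : ℕ => ∏ i ∈ Finset.range (k + 1), x (n + i)) ∧
      Tendsto (fun n : ℕ => ∏ i ∈ Finset.range (k + 1), x (n + i)) atTop
        (𝓝 0) :=
  product_strictly_decreasing_to_zero_general k x hinit hrec
end

section
/- If a map f : ℝ → ℝ has fixed point x̄ with f'(x̄) = 1 and f''(x̄) < 0 (f twice continuously differentiable near x̄), then x̄ is semiasymptotically stable from the right: there is γ > 0 such that for 0 < x₀ - x̄ < γ, the iterates fⁿ(x₀) stay to the right of x̄ and converge to x̄. -/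
/-!
Since `f' x̄ = 1` and `f'' x̄ < 0`, the derivative `f'` lies in `(0, 1)` just to the right of `x̄`,
so by the mean value theorem `x̄ < f x < x` there. The iterates of a point `x₀` in that range
therefore decrease and stay above `x̄`; their limit is a fixed point of `f` in `[x̄, x₀]`, and the
only one is `x̄`.
-/

open Filter Topology Set

theorem mapsTo_Ioo_of_apply_mem_Ioo {α : Type*} [Preorder α] {f : α → α} {a c : α}
    (hf : ∀ x ∈ Ioo a c, f x ∈ Ioo a x) : MapsTo f (Ioo a c) (Ioo a c) :=
  fun x hx => ⟨(hf x hx).1, (hf x hx).2.trans hx.2⟩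

theorem antitone_iterate_of_apply_mem_Ioo {α : Type*} [Preorder α] {f : α → α} {a c x₀ : α}
    (hf : ∀ x ∈ Ioo a c, f x ∈ Ioo a x) (hx₀ : x₀ ∈ Ioo a c) : Antitone fun n : ℕ => f^[n] x₀ :=
  antitone_nat_of_succ_le fun n => by
    rw [Function.iterate_succ_apply']
    exact (hf _ ((mapsTo_Ioo_of_apply_mem_Ioo hf).iterate n hx₀)).2.le

theorem tendsto_iterate_of_apply_mem_Ioo {α : Type*} [ConditionallyCompleteLinearOrder α]
    [TopologicalSpace α] [OrderTopology α] {f : α → α} {a c x₀ : α}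
    (hf : ∀ x ∈ Ioo a c, f x ∈ Ioo a x)
    (hcont : ContinuousOn f (Ioo a c)) (hx₀ : x₀ ∈ Ioo a c) :
    Tendsto (fun n : ℕ => f^[n] x₀) atTop (𝓝 a) := by
  have hmem : ∀ n, f^[n] x₀ ∈ Ioo a c := fun n => (mapsTo_Ioo_of_apply_mem_Ioo hf).iterate n hx₀
  have hbdd : BddBelow (range fun n : ℕ => f^[n] x₀) :=
    ⟨a, forall_mem_range.2 fun n => (hmem n).1.le⟩
  have hlim := tendsto_atTop_ciInf (antitone_iterate_of_apply_mem_Ioo hf hx₀) hbdd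
  set L := ⨅ n : ℕ, f^[n] x₀
  suffices a = L by rwa [this]
  refine (le_ciInf fun n => (hmem n).1.le : a ≤ L).eq_or_lt.resolve_right fun haL => ?_
  have hLc : L < c := (ciInf_le hbdd 0).trans_lt hx₀.2
  have hfix : Function.IsFixedPt f L :=
    isFixedPt_of_tendsto_iterate hlim (hcont.continuousAt (Ioo_mem_nhds haL hLc))
  exact (hf L ⟨haL, hLc⟩).2.ne hfix

theorem HasDerivAt.eventually_nhdsGT_lt_of_neg {g : ℝ → ℝ} {g' x : ℝ} (h : HasDerivAt g g' x)
    (hg' : g' < 0) : ∀ᶠ y in 𝓝[>] x, g y < g x := by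
  filter_upwards [h.hasDerivWithinAt.limsup_slope_le' (lt_irrefl x) hg', self_mem_nhdsWithin]
    with y hslope hxy
  exact (slope_neg_iff_of_le (le_of_lt hxy)).1 hslope

theorem eventually_differentiableAt_and_deriv_mem_Ioo {f : ℝ → ℝ} {x : ℝ}
    (hf : ContDiffAt ℝ 2 f x) (hd1 : deriv f x = 1) (hd2 : deriv (deriv f) x < 0) :
    ∀ᶠ y in 𝓝[>] x, DifferentiableAt ℝ f y ∧ deriv f y ∈ Ioo 0 1 := by
  have hf' : DifferentiableAt ℝ (deriv f) x :=
    (hf.derivWithin (m := 1) (by norm_num)).differentiableAt one_ne_zero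
  have hdiff : ∀ᶠ y in 𝓝 x, DifferentiableAt ℝ f y :=
    (hf.eventually (by simp)).mono fun y hy => hy.differentiableAt (by norm_num)
  have hpos : ∀ᶠ y in 𝓝 x, 0 < deriv f y :=
    hf'.continuousAt.eventually_const_lt (hd1 ▸ one_pos)
  have hlt : ∀ᶠ y in 𝓝[>] x, deriv f y < 1 := hd1 ▸ hf'.hasDerivAt.eventually_nhdsGT_lt_of_neg hd2
  filter_upwards [nhdsWithin_le_nhds hdiff, nhdsWithin_le_nhds hpos, hlt] with y h1 h2 h3
  exact ⟨h1, h2, h3⟩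

theorem apply_mem_Ioo_of_deriv_mem_Ioo {f : ℝ → ℝ} {a b : ℝ} (hfix : f a = a)
    (hcont : ContinuousAt f a) (hf : ∀ y ∈ Ioo a b, DifferentiableAt ℝ f y ∧ deriv f y ∈ Ioo 0 1) :
    ∀ x ∈ Ioo a b, f x ∈ Ioo a x := by
  intro x hx
  have hsub : Ioo a x ⊆ Ioo a b := Ioo_subset_Ioo_right hx.2.le
  have hcont' : ContinuousOn f (Icc a x) := by
    rintro y ⟨hay, hyx⟩
    rcases hay.eq_or_lt with rfl | hay
    · exact hcont.continuousWithinAt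
    · exact (hf y ⟨hay, hyx.trans_lt hx.2⟩).1.continuousAt.continuousWithinAt
  obtain ⟨ξ, hξ, hslope⟩ := exists_deriv_eq_slope f hx.1 hcont' fun y hy =>
    (hf y (hsub hy)).1.differentiableWithinAt
  have hξ' := (hf ξ (hsub hξ)).2
  rw [hslope, hfix, mem_Ioo, div_pos_iff_of_pos_right (sub_pos.2 hx.1),
    div_lt_one (sub_pos.2 hx.1)] at hξ'
  exact ⟨by linarith [hξ'.1], by linarith [hξ'.2]⟩

/-- If f is C² near a fixed point x̄ with f'(x̄) = 1 and f''(x̄) < 0, then x̄ is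
semiasymptotically stable from the right: for x₀ slightly to the right of x̄,
the iterates stay to the right of x̄ and converge to x̄. -/
theorem semiasymptotic_stability_from_right (f : ℝ → ℝ) (xbar : ℝ)
    (hC2 : ContDiffAt ℝ 2 f xbar) (hfix : f xbar = xbar)
    (hd1 : deriv f xbar = 1) (hd2 : deriv (deriv f) xbar < 0) :
    ∃ γ : ℝ, 0 < γ ∧
      ∀ x₀ : ℝ, xbar < x₀ → x₀ < xbar + γ →
        (∀ n : ℕ, xbar < f^[n] x₀) ∧
          Tendsto (fun n : ℕ => f^[n] x₀) atTop (𝓝 xbar) := by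
  obtain ⟨b, hb, hgood⟩ := mem_nhdsGT_iff_exists_Ioo_subset.1
    (eventually_differentiableAt_and_deriv_mem_Ioo hC2 hd1 hd2)
  have hstep : ∀ x ∈ Ioo xbar b, f x ∈ Ioo xbar x :=
    apply_mem_Ioo_of_deriv_mem_Ioo hfix hC2.continuousAt fun y hy => hgood hy
  have hcont : ContinuousOn f (Ioo xbar b) := fun x hx =>
    (hgood hx).1.continuousAt.continuousWithinAt
  refine ⟨b - xbar, sub_pos.2 hb, fun x₀ hx₀ hx₀' => ?_⟩
  have hx₀b : x₀ ∈ Ioo xbar b := ⟨hx₀, by linarith⟩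
  exact ⟨fun n => ((mapsTo_Ioo_of_apply_mem_Ioo hstep).iterate n hx₀b).1,
    tendsto_iterate_of_apply_mem_Ioo hstep hcont hx₀b⟩
end
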